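/- arXiv:2508.13510 — 5 statements merged into one kernel-verified Lean document; each statement's English description precedes it below -/
import Mathlib

section
/- Let A be an N×N invertible Hermitian complex matrix and let η : ℝ → ℂ be an integrable function with Fourier transform η̂(s) = ∫_ℝ η(k) e^{-i k s} dk. Assume that for every eigenvalue λ of A the improper integral ∫_0^∞ η̂(λ s) ds converges to 1/λ, and that the iterated integral ∫_0^∞ ∫_ℝ η(k) e^{-i k A s} dk ds (with e^{-i k A s} the matrix exponential) is well defined, i.e. k ↦ η(k) e^{-i k A s} is integrable for each s ≥ 0 and s ↦ ∫_ℝ η(k) e^{-i k A s} dk is integrable on [0, ∞). Then A^{-1} = ∫_0^∞ ∫_ℝ η(k) e^{-i k A s} dk ds. -/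
open MeasureTheory Filter Matrix

attribute [local instance] Matrix.normedAddCommGroup Matrix.normedSpace

/-!
Write `A = U D U⋆` with `U` the eigenvector unitary and `D = diag λ`. Conjugation by `U` is a
continuous linear automorphism of the matrix space, so it commutes with Bochner integrals, and
`exp (-i k s A) = U diag (exp (-i k s λⱼ)) U⋆`. Both integrals therefore act on the diagonal
entries separately: the inner one produces `η̂ (λⱼ s)`, the outer one `1 / λⱼ` by hypothesis, and
`U diag (1 / λⱼ) U⋆ = A⁻¹`.
-/

namespace Matrix

variable {α n 𝕜 : Type*} [MeasurableSpace α] {μ : Measure α} [Fintype n] [DecidableEq n]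
  [RCLike 𝕜]

theorem exp_conjStarAlgAut (u : unitary (Matrix n n 𝕜)) (M : Matrix n n 𝕜) :
    NormedSpace.exp (Unitary.conjStarAlgAut 𝕜 _ u M)
      = Unitary.conjStarAlgAut 𝕜 _ u (NormedSpace.exp M) := by
  simpa using exp_units_conj (Unitary.toUnits u) M

theorem IsHermitian.exp_smul_eq_conj_diagonal {A : Matrix n n ℂ} (hA : A.IsHermitian) (c : ℂ) :
    NormedSpace.exp (c • A) = Unitary.conjStarAlgAut ℂ _ hA.eigenvectorUnitary
      (diagonal fun i => Complex.exp (c * hA.eigenvalues i)) := by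
  conv_lhs => rw [hA.spectral_theorem, ← map_smul, exp_conjStarAlgAut, ← diagonal_smul,
    exp_diagonal]
  congr 2
  ext i
  simp [Complex.exp_eq_exp_ℂ]

theorem IsHermitian.inv_eq_conj_diagonal {A : Matrix n n 𝕜} (hA : A.IsHermitian)
    (h : IsUnit A.det) :
    A⁻¹ = Unitary.conjStarAlgAut 𝕜 _ hA.eigenvectorUnitary
      (diagonal fun i => (hA.eigenvalues i : 𝕜)⁻¹) := by
  have hne : ∀ i, (hA.eigenvalues i : 𝕜) ≠ 0 := fun i hi =>
    h.ne_zero (hA.det_eq_prod_eigenvalues ▸ Finset.prod_eq_zero (Finset.mem_univ i) hi)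
  refine inv_eq_right_inv ?_
  conv_lhs => arg 1; rw [hA.spectral_theorem]
  rw [← map_mul, diagonal_mul_diagonal]
  simp [hne]

/- The `ContinuousENorm` instance is passed explicitly because the topology of the local matrix
norm is not reducibly the one of `Matrix`, so instance search does not find it. -/
theorem integrable_conjStarAlgAut_iff (u : unitary (Matrix n n 𝕜)) {F : α → Matrix n n 𝕜} :
    @Integrable _ _ SeminormedAddGroup.toContinuousENorm _ _
      (fun x => Unitary.conjStarAlgAut 𝕜 _ u (F x)) μ ↔
    @Integrable _ _ SeminormedAddGroup.toContinuousENorm _ _ F μ :=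
  (Unitary.conjStarAlgAut 𝕜 _ u).toAlgEquiv.toLinearEquiv.toContinuousLinearEquiv
    |>.integrable_comp_iff

theorem integral_conjStarAlgAut (u : unitary (Matrix n n 𝕜)) (F : α → Matrix n n 𝕜) :
    ∫ x, Unitary.conjStarAlgAut 𝕜 _ u (F x) ∂μ = Unitary.conjStarAlgAut 𝕜 _ u (∫ x, F x ∂μ) :=
  (Unitary.conjStarAlgAut 𝕜 _ u).toAlgEquiv.toLinearEquiv.toContinuousLinearEquiv
    |>.integral_comp_comm F

theorem integrable_apply_of_integrable_diagonal {g : α → n → 𝕜}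
    (hg : @Integrable _ _ SeminormedAddGroup.toContinuousENorm _ _ (fun x => diagonal (g x)) μ)
    (i : n) : Integrable (fun x => g x i) μ :=
  (Integrable.eval (Integrable.eval hg i) i).congr
    (ae_of_all _ fun x => diagonal_apply_eq (g x) i)

theorem integral_diagonal {g : α → n → 𝕜}
    (hg : @Integrable _ _ SeminormedAddGroup.toContinuousENorm _ _ (fun x => diagonal (g x)) μ) :
    ∫ x, diagonal (g x) ∂μ = diagonal fun i => ∫ x, g x i ∂μ := by
  ext i j
  refine ((entryLinearMap 𝕜 𝕜 i j).toContinuousLinearMap.integral_comp_comm hg).symm.trans ?_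
  by_cases h : i = j
  · subst h
    rw [diagonal_apply_eq]
    exact integral_congr_ae (ae_of_all _ fun x => diagonal_apply_eq (g x) i)
  · rw [diagonal_apply_ne _ h]
    exact (integral_congr_ae (ae_of_all _ fun x => diagonal_apply_ne (g x) h)).trans
      (integral_zero _ _)

end Matrix

theorem stmt_0_general {N : ℕ} (A : Matrix (Fin N) (Fin N) ℂ) (hA : A.IsHermitian)
    (hInv : IsUnit A.det) (η : ℝ → ℂ)
    (ηhat : ℝ → ℂ)
    (hηhat : ∀ s : ℝ, ηhat s = ∫ k : ℝ, η k * Complex.exp (-(Complex.I * k * s)))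
    (heig : ∀ i : Fin N,
      Tendsto (fun T : ℝ => ∫ s in (0:ℝ)..T, ηhat (hA.eigenvalues i * s)) atTop
        (nhds (1 / (hA.eigenvalues i : ℂ))))
    (hint1 : ∀ s : ℝ, 0 ≤ s →
      @Integrable _ _ SeminormedAddGroup.toContinuousENorm _ _
        (fun k : ℝ => η k • NormedSpace.exp ((-(Complex.I * k * s)) • A)) volume)
    (hint2 : @IntegrableOn _ _ _ _ SeminormedAddGroup.toContinuousENorm
      (fun s : ℝ => ∫ k : ℝ, η k • NormedSpace.exp ((-(Complex.I * k * s)) • A))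
      (Set.Ioi 0) volume) :
    A⁻¹ = ∫ s in Set.Ioi (0:ℝ), ∫ k : ℝ,
        η k • NormedSpace.exp ((-(Complex.I * k * s)) • A) := by
  have hintegrand : ∀ s k : ℝ, η k • NormedSpace.exp ((-(Complex.I * k * s)) • A) =
      Unitary.conjStarAlgAut ℂ _ hA.eigenvectorUnitary
        (diagonal fun i => η k * Complex.exp (-(Complex.I * k * ↑(hA.eigenvalues i * s)))) := by
    intro s k
    rw [hA.exp_smul_eq_conj_diagonal, ← map_smul, ← diagonal_smul]
    congr 2
    ext i
    simp only [Pi.smul_apply, smul_eq_mul]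
    push_cast
    ring_nf
  have hinner : ∀ s : ℝ, 0 ≤ s →
      ∫ k : ℝ, η k • NormedSpace.exp ((-(Complex.I * k * s)) • A) =
        Unitary.conjStarAlgAut ℂ _ hA.eigenvectorUnitary
          (diagonal fun i => ηhat (hA.eigenvalues i * s)) := by
    intro s hs
    have hdiag := (integrable_conjStarAlgAut_iff _).mp
      ((hint1 s hs).congr (ae_of_all _ (hintegrand s)))
    simp_rw [hintegrand s, integral_conjStarAlgAut, integral_diagonal hdiag, hηhat]
  have hdiag := (integrable_conjStarAlgAut_iff _).mp
    (hint2.congr_fun (fun s hs => hinner s (le_of_lt hs)) measurableSet_Ioi)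
  have houter : ∀ i, ∫ s in Set.Ioi 0, ηhat (hA.eigenvalues i * s) =
      (hA.eigenvalues i : ℂ)⁻¹ := fun i => by
    rw [← one_div]
    exact tendsto_nhds_unique (intervalIntegral_tendsto_integral_Ioi 0
      (integrable_apply_of_integrable_diagonal hdiag i) tendsto_id) (heig i)
  rw [setIntegral_congr_fun measurableSet_Ioi (fun s hs => hinner s (le_of_lt hs)),
    integral_conjStarAlgAut, integral_diagonal hdiag]
  simp_rw [houter]
  exact hA.inv_eq_conj_diagonal hInv

/-- Let `A` be an `N×N` invertible Hermitian complex matrix and `η : ℝ → ℂ`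
integrable, with Fourier transform `η̂(s) = ∫_ℝ η(k) e^{-iks} dk`. Assume for every eigenvalue
`λ` of `A` the improper integral `∫_0^∞ η̂(λ s) ds` converges to `1/λ`, and that the iterated
integral `∫_0^∞ ∫_ℝ η(k) e^{-ikAs} dk ds` is well defined. Then
`A⁻¹ = ∫_0^∞ ∫_ℝ η(k) e^{-ikAs} dk ds`. -/
theorem stmt_0 {N : ℕ} (A : Matrix (Fin N) (Fin N) ℂ) (hA : A.IsHermitian)
    (hInv : IsUnit A.det) (η : ℝ → ℂ) (hη : Integrable η)
    (ηhat : ℝ → ℂ)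
    (hηhat : ∀ s : ℝ, ηhat s = ∫ k : ℝ, η k * Complex.exp (-(Complex.I * k * s)))
    (heig : ∀ i : Fin N,
      Tendsto (fun T : ℝ => ∫ s in (0:ℝ)..T, ηhat (hA.eigenvalues i * s)) atTop
        (nhds (1 / (hA.eigenvalues i : ℂ))))
    (hint1 : ∀ s : ℝ, 0 ≤ s →
      @Integrable _ _ SeminormedAddGroup.toContinuousENorm _ _
        (fun k : ℝ => η k • NormedSpace.exp ((-(Complex.I * k * s)) • A)) volume)
    (hint2 : @IntegrableOn _ _ _ _ SeminormedAddGroup.toContinuousENorm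
      (fun s : ℝ => ∫ k : ℝ, η k • NormedSpace.exp ((-(Complex.I * k * s)) • A))
      (Set.Ioi 0) volume) :
    A⁻¹ = ∫ s in Set.Ioi (0:ℝ), ∫ k : ℝ,
        η k • NormedSpace.exp ((-(Complex.I * k * s)) • A) :=
  stmt_0_general A hA hInv η ηhat hηhat heig hint1 hint2
end

section
/- Let A be an N×N invertible Hermitian complex matrix, and let φ(k) = (i/√(2π)) k e^{-k²/2}. Then A^{-1} = ∫_0^∞ ∫_ℝ φ(k) e^{-i k A s} dk ds, where e^{-i k A s} is the matrix exponential and both iterated integrals converge (the inner as a Bochner integral over ℝ, the outer as an improper integral over [0, ∞)). -/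
/-!
Diagonalising `A = U diag(λ) U*` reduces everything to one eigenvalue `λ` at a time.
For real `x`, `∫ φ(k) e^{-ikx} dk = x e^{-x²/2}`: writing `g(k) = e^{-k²/2 - ikx}`, one has
`k g = -g' - ix g`, the integral of `g'` vanishes and that of `g` is the Gaussian Fourier
transform `√(2π) e^{-x²/2}`. With `x = sλ` the outer integral is elementary,
`∫_0^T sλ e^{-(sλ)²/2} ds = (1 - e^{-(Tλ)²/2}) / λ`, which tends to `1/λ` as `λ ≠ 0`.
-/

open MeasureTheory Filter Matrix Complex Real

attribute [local instance] Matrix.normedAddCommGroup Matrix.normedSpace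

lemma cexp_neg_sq_div_two_sub_eq (x k : ℝ) :
    cexp (-(k : ℂ) ^ 2 / 2 - I * x * k) = cexp (-(1 / 2 : ℂ) * k ^ 2 + -(I * x) * k + 0) := by
  ring_nf

lemma integrable_cexp_neg_sq_div_two_sub (x : ℝ) :
    Integrable fun k : ℝ => cexp (-(k : ℂ) ^ 2 / 2 - I * x * k) := by
  simpa only [cexp_neg_sq_div_two_sub_eq] using
    integrable_cexp_quadratic (b := 1 / 2) (by norm_num) (-(I * x)) 0

lemma integral_cexp_neg_sq_div_two_sub (x : ℝ) :
    ∫ k : ℝ, cexp (-(k : ℂ) ^ 2 / 2 - I * x * k)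
      = √(2 * π) * cexp (-(x : ℂ) ^ 2 / 2) := by
  simp_rw [cexp_neg_sq_div_two_sub_eq]
  have hpi : (π : ℂ) / -(-(1 / 2 : ℂ)) = ((2 * π : ℝ) : ℂ) := by push_cast; ring
  have hsqrt : ((2 * π : ℝ) : ℂ) ^ (1 / 2 : ℂ) = √(2 * π) := by
    rw [Real.sqrt_eq_rpow, ofReal_cpow (by positivity)]
    norm_num
  rw [integral_cexp_quadratic (by norm_num), hpi, hsqrt]
  congr 2
  ring_nf
  rw [I_sq]
  ring

lemma integrable_mul_cexp_neg_sq_div_two_sub (x : ℝ) :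
    Integrable fun k : ℝ => (k : ℂ) * cexp (-(k : ℂ) ^ 2 / 2 - I * x * k) := by
  have hbdd : ∀ k : ℝ, ‖cexp (-(I * x * k))‖ ≤ 1 := fun k => by
    rw [norm_exp]; simp
  refine ((integrable_mul_cexp_neg_mul_sq (b := 1 / 2) (by norm_num)).mul_bdd
    (by fun_prop) (ae_of_all _ hbdd)).congr (ae_of_all _ fun k => ?_)
  dsimp only
  rw [sub_eq_add_neg, Complex.exp_add, mul_assoc, show -(1 / 2 : ℂ) * k ^ 2 = -k ^ 2 / 2 by ring]

lemma integral_mul_cexp_neg_sq_div_two_sub (x : ℝ) :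
    ∫ k : ℝ, (k : ℂ) * cexp (-(k : ℂ) ^ 2 / 2 - I * x * k)
      = -(I * x) * (√(2 * π) * cexp (-(x : ℂ) ^ 2 / 2)) := by
  set g : ℝ → ℂ := fun k => cexp (-(k : ℂ) ^ 2 / 2 - I * x * k)
  have hg : Integrable g := integrable_cexp_neg_sq_div_two_sub x
  have hkg : Integrable fun k : ℝ => (k : ℂ) * g k := integrable_mul_cexp_neg_sq_div_two_sub x
  have hderiv (k : ℝ) : HasDerivAt g (-((k : ℂ) * g k) - I * x * g k) k := by
    have h : HasDerivAt (fun z : ℂ => -z ^ 2 / 2 - I * x * z) (-k - I * x) k :=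
      (((hasDerivAt_pow 2 (k : ℂ)).neg.div_const 2).sub
        ((hasDerivAt_id (k : ℂ)).const_mul (I * x))).congr_deriv (by norm_num; ring)
    exact h.cexp.comp_ofReal.congr_deriv (by simp only [g]; ring)
  show ∫ k : ℝ, (k : ℂ) * g k = _
  have hzero := integral_eq_zero_of_hasDerivAt_of_integrable hderiv
    (hkg.neg.sub (hg.const_mul _)) hg
  rw [integral_sub (f := fun k : ℝ => -((k : ℂ) * g k)) hkg.neg (hg.const_mul _), integral_neg,
    integral_const_mul, integral_cexp_neg_sq_div_two_sub] at hzero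
  linear_combination -hzero

noncomputable def fourierKernel (k : ℝ) : ℂ :=
  I / (√(2 * π) : ℂ) * k * cexp (-(k : ℂ) ^ 2 / 2)

lemma fourierKernel_mul_cexp (k x : ℝ) :
    fourierKernel k * cexp (-(I * k * x))
      = I / √(2 * π) * (k * cexp (-(k : ℂ) ^ 2 / 2 - I * x * k)) := by
  rw [fourierKernel, sub_eq_add_neg, Complex.exp_add]
  ring_nf

lemma integrable_fourierKernel_mul_cexp (x : ℝ) :
    Integrable fun k : ℝ => fourierKernel k * cexp (-(I * k * x)) := by
  simpa only [fourierKernel_mul_cexp] using (integrable_mul_cexp_neg_sq_div_two_sub x).const_mul _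

lemma integral_fourierKernel_mul_cexp (x : ℝ) :
    ∫ k : ℝ, fourierKernel k * cexp (-(I * k * x))
      = ((x * Real.exp (-x ^ 2 / 2) : ℝ) : ℂ) := by
  have hsqrt : (√(2 * π) : ℂ) ≠ 0 := ofReal_ne_zero.mpr (by positivity)
  simp_rw [fourierKernel_mul_cexp]
  rw [integral_const_mul, integral_mul_cexp_neg_sq_div_two_sub]
  push_cast
  field_simp
  ring_nf
  rw [I_sq]
  ring

lemma tendsto_intervalIntegral_mul_exp_neg_sq (m : ℝ) (hm : m ≠ 0) :
    Tendsto (fun T : ℝ => ∫ s in (0 : ℝ)..T, s * m * Real.exp (-(s * m) ^ 2 / 2)) atTop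
      (nhds m⁻¹) := by
  have hF (s : ℝ) : HasDerivAt (fun s : ℝ => -m⁻¹ * Real.exp (-(s * m) ^ 2 / 2))
      (s * m * Real.exp (-(s * m) ^ 2 / 2)) s := by
    have h := ((((hasDerivAt_id s).mul_const m).pow 2).neg.div_const 2).exp.const_mul (-m⁻¹)
    refine h.congr_deriv ?_
    simp only [Pi.pow_apply, Pi.neg_apply, id_eq]
    field_simp
    ring
  have hint (T : ℝ) : ∫ s in (0 : ℝ)..T, s * m * Real.exp (-(s * m) ^ 2 / 2)
      = m⁻¹ - m⁻¹ * Real.exp (-(m ^ 2 / 2) * T ^ 2) := by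
    rw [intervalIntegral.integral_eq_sub_of_hasDerivAt (fun s _ => hF s)
      (by apply Continuous.intervalIntegrable; fun_prop)]
    ring_nf
    rw [Real.exp_zero]
    ring
  have hexp : Tendsto (fun T : ℝ => Real.exp (-(m ^ 2 / 2) * T ^ 2)) atTop (nhds 0) :=
    Real.tendsto_exp_atBot.comp ((tendsto_pow_atTop two_ne_zero).const_mul_atTop_of_neg
      (neg_neg_of_pos (by positivity)))
  simp_rw [hint]
  simpa using (hexp.const_mul m⁻¹).const_sub m⁻¹

namespace Matrix.IsHermitian

variable {n : Type*} [Fintype n] [DecidableEq n] {A : Matrix n n ℂ}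

noncomputable def diagonalize (hA : A.IsHermitian) : (n → ℂ) →ₐ[ℂ] Matrix n n ℂ :=
  (Unitary.conjStarAlgAut ℂ _ hA.eigenvectorUnitary).toAlgEquiv.toAlgHom.comp (diagonalAlgHom ℂ)

lemma diagonalize_eigenvalues (hA : A.IsHermitian) :
    hA.diagonalize (fun i => (hA.eigenvalues i : ℂ)) = A :=
  hA.spectral_theorem.symm

lemma diagonalize_eq_sum (hA : A.IsHermitian) (c : n → ℂ) :
    hA.diagonalize c = ∑ i, c i • hA.diagonalize (Pi.single i 1) := by
  conv_lhs => rw [pi_eq_sum_univ' c]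
  simp only [map_sum, map_smul]

lemma exp_smul_eq_diagonalize (hA : A.IsHermitian) (c : ℂ) :
    NormedSpace.exp (c • A) = hA.diagonalize (fun i => cexp (c * hA.eigenvalues i)) := by
  set U : Matrix n n ℂ := ↑hA.eigenvectorUnitary
  have hU : U * star U = 1 := mem_unitaryGroup_iff.mp hA.eigenvectorUnitary.2
  have hUinv : U⁻¹ = star U := inv_eq_right_inv hU
  have hdiag (d : n → ℂ) : hA.diagonalize d = U * diagonal d * U⁻¹ := by
    rw [hUinv]; rfl
  conv_lhs => rw [← hA.diagonalize_eigenvalues, ← map_smul]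
  rw [hdiag, hdiag, exp_conj _ _ (.of_mul_eq_one _ hU), exp_diagonal, Pi.exp_def]
  simp only [Pi.smul_apply, smul_eq_mul, Complex.exp_eq_exp_ℂ]

lemma inv_eq_diagonalize (hA : A.IsHermitian) (h : ∀ i, hA.eigenvalues i ≠ 0) :
    A⁻¹ = hA.diagonalize (fun i => ((hA.eigenvalues i : ℂ))⁻¹) := by
  refine inv_eq_right_inv ?_
  conv_lhs => enter [1]; rw [← hA.diagonalize_eigenvalues]
  rw [← map_mul, ← map_one hA.diagonalize]
  congr 1
  funext i
  exact mul_inv_cancel₀ (ofReal_ne_zero.mpr (h i))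

lemma eigenvalues_ne_zero (hA : A.IsHermitian) (h : IsUnit A.det) (i : n) :
    hA.eigenvalues i ≠ 0 := by
  rw [isUnit_iff_ne_zero, hA.det_eq_prod_eigenvalues, Finset.prod_ne_zero_iff] at h
  exact ofReal_ne_zero.mp (h i (Finset.mem_univ i))

lemma fourierKernel_smul_exp_eq_sum (hA : A.IsHermitian) (s k : ℝ) :
    fourierKernel k • NormedSpace.exp ((-(I * k * s)) • A)
      = ∑ i, (fourierKernel k * cexp (-(I * k * (s * hA.eigenvalues i : ℝ)))) •
          hA.diagonalize (Pi.single i 1) := by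
  rw [hA.exp_smul_eq_diagonalize, hA.diagonalize_eq_sum, Finset.smul_sum]
  refine Finset.sum_congr rfl fun i _ => ?_
  rw [smul_smul]
  push_cast
  ring_nf

/- Instance search does not find `ContinuousENorm` for the local matrix norm, so it is supplied
explicitly, exactly as in the statement of `stmt_1`. -/
lemma integrable_fourierKernel_smul_exp (hA : A.IsHermitian) (s : ℝ) :
    @Integrable _ _ SeminormedAddGroup.toContinuousENorm _ _
      (fun k : ℝ => fourierKernel k • NormedSpace.exp ((-(I * k * s)) • A)) volume := by
  simp_rw [hA.fourierKernel_smul_exp_eq_sum]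
  exact integrable_finsetSum _ fun i _ => (integrable_fourierKernel_mul_cexp _).smul_const _

lemma integral_fourierKernel_smul_exp (hA : A.IsHermitian) (s : ℝ) :
    ∫ k : ℝ, fourierKernel k • NormedSpace.exp ((-(I * k * s)) • A)
      = ∑ i, ((s * hA.eigenvalues i * Real.exp (-(s * hA.eigenvalues i) ^ 2 / 2) : ℝ) : ℂ) •
          hA.diagonalize (Pi.single i 1) := by
  simp_rw [hA.fourierKernel_smul_exp_eq_sum]
  rw [integral_finsetSum _ fun i _ => (integrable_fourierKernel_mul_cexp _).smul_const _]
  simp_rw [integral_smul_const, integral_fourierKernel_mul_cexp]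

lemma intervalIntegral_integral_fourierKernel_smul_exp (hA : A.IsHermitian) (T : ℝ) :
    ∫ s in (0 : ℝ)..T, ∫ k : ℝ, fourierKernel k • NormedSpace.exp ((-(I * k * s)) • A)
      = ∑ i, ((∫ s in (0 : ℝ)..T, s * hA.eigenvalues i *
          Real.exp (-(s * hA.eigenvalues i) ^ 2 / 2) : ℝ) : ℂ) •
        hA.diagonalize (Pi.single i 1) := by
  simp_rw [hA.integral_fourierKernel_smul_exp]
  rw [intervalIntegral.integral_finsetSum fun i _ => by
    apply Continuous.intervalIntegrable; fun_prop]
  simp_rw [intervalIntegral.integral_smul_const, intervalIntegral.integral_ofReal]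

end Matrix.IsHermitian

/-- For an `N×N` invertible Hermitian complex matrix `A` and the kernel
`φ(k) = (i/√(2π)) k e^{-k²/2}`, one has `A⁻¹ = ∫_0^∞ ∫_ℝ φ(k) e^{-ikAs} dk ds`, where both
iterated integrals converge (the inner as a Bochner integral over `ℝ`, the outer as an
improper integral over `[0,∞)`). -/
theorem stmt_1 {N : ℕ} (A : Matrix (Fin N) (Fin N) ℂ) (hA : A.IsHermitian)
    (hInv : IsUnit A.det) :
    (∀ s : ℝ, @Integrable _ _ SeminormedAddGroup.toContinuousENorm _ _ (fun k : ℝ =>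
        (Complex.I / (Real.sqrt (2 * Real.pi) : ℂ) * k * Complex.exp (-(k : ℂ) ^ 2 / 2)) •
          NormedSpace.exp ((-(Complex.I * k * s)) • A)) volume) ∧
    Tendsto (fun T : ℝ => ∫ s in (0:ℝ)..T, ∫ k : ℝ,
        (Complex.I / (Real.sqrt (2 * Real.pi) : ℂ) * k * Complex.exp (-(k : ℂ) ^ 2 / 2)) •
          NormedSpace.exp ((-(Complex.I * k * s)) • A))
      atTop (nhds A⁻¹) := by
  simp only [← fourierKernel.eq_1]
  refine ⟨hA.integrable_fourierKernel_smul_exp, ?_⟩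
  have hμ := hA.eigenvalues_ne_zero hInv
  rw [hA.inv_eq_diagonalize hμ, hA.diagonalize_eq_sum]
  simp_rw [hA.intervalIntegral_integral_fourierKernel_smul_exp, ← ofReal_inv]
  exact tendsto_finsetSum _ fun i _ => ((continuous_ofReal.tendsto _).comp
    (tendsto_intervalIntegral_mul_exp_neg_sq _ (hμ i))).smul_const _
end

section
/- Let A be an N×N invertible Hermitian complex matrix and b ∈ ℂ^N. Then the solution x = A^{-1} b of the linear system A x = b satisfies x = ∫_0^∞ v(t, 0) dt, where v(t, p) = (p I + t A) exp(-(p I + t A)²/2) b; equivalently, the improper integral ∫_0^∞ t A exp(-(t²/2) A²) b dt converges and equals A^{-1} b. -/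
/-! With `E t = exp (-(t²/2) • A²)` we have `d/dt (A⁻¹ - A⁻¹ E t) = t • A E t`, so the integral
over `[0, T]` of `t A E(t) b` is `A⁻¹ b - A⁻¹ E(T) b`. Since `A² = Aᴴ A` is positive definite,
diagonalising it shows `E T → 0`, and the integral tends to `A⁻¹ b`. At `p = 0`, `v t 0` is
exactly this integrand. -/

open MeasureTheory Filter Matrix
open NormedSpace
open scoped Topology

section GaussianExp

variable {𝔸 : Type*} [NormedRing 𝔸] [NormedAlgebra ℝ 𝔸] [CompleteSpace 𝔸]

theorem hasDerivAt_exp_neg_sq_half_smul (x : 𝔸) (t : ℝ) :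
    HasDerivAt (fun s : ℝ => exp ((-(s ^ 2 / 2)) • x))
      ((-t) • (x * exp ((-(t ^ 2 / 2)) • x))) t := by
  have h : HasDerivAt (fun s : ℝ => -(s ^ 2 / 2)) (-t) t := by
    refine ((hasDerivAt_pow 2 t).div_const 2).fun_neg.congr_deriv ?_
    ring
  exact (hasDerivAt_exp_smul_const' x _).scomp t h

theorem continuous_smul_mul_exp_neg_sq_half_smul (x y : 𝔸) :
    Continuous fun t : ℝ => t • (y * exp ((-(t ^ 2 / 2)) • x)) :=
  continuous_id.smul <| continuous_const.mul <|
    continuous_iff_continuousAt.2 fun t => (hasDerivAt_exp_neg_sq_half_smul x t).continuousAt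

theorem hasDerivAt_inv_sub_inv_mul_exp_neg_sq_half_smul_mul_self (u : 𝔸ˣ) (t : ℝ) :
    HasDerivAt (fun s : ℝ => ↑u⁻¹ - ↑u⁻¹ * exp ((-(s ^ 2 / 2)) • (u * u : 𝔸)))
      (t • (u * exp ((-(t ^ 2 / 2)) • (u * u : 𝔸)))) t := by
  refine (((hasDerivAt_exp_neg_sq_half_smul (u * u : 𝔸) t).const_mul (↑u⁻¹ : 𝔸)).const_sub
    (↑u⁻¹ : 𝔸)).congr_deriv ?_
  rw [mul_smul_comm, ← mul_assoc, ← mul_assoc, Units.inv_mul, one_mul, neg_smul, neg_neg]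

theorem integral_smul_mul_exp_neg_sq_half_smul_mul_self (u : 𝔸ˣ) (T : ℝ) :
    ∫ t in (0 : ℝ)..T, t • (u * exp ((-(t ^ 2 / 2)) • (u * u : 𝔸))) =
      ↑u⁻¹ - ↑u⁻¹ * exp ((-(T ^ 2 / 2)) • (u * u : 𝔸)) := by
  rw [intervalIntegral.integral_eq_sub_of_hasDerivAt
    (fun t _ => hasDerivAt_inv_sub_inv_mul_exp_neg_sq_half_smul_mul_self u t)
    ((continuous_smul_mul_exp_neg_sq_half_smul _ _).intervalIntegrable _ _)]
  simp

theorem tendsto_integral_smul_mul_exp_neg_sq_half_smul_mul_self (u : 𝔸ˣ)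
    (h : Tendsto (fun T : ℝ => exp ((-(T ^ 2 / 2)) • (u * u : 𝔸))) atTop (𝓝 0)) :
    Tendsto (fun T : ℝ => ∫ t in (0 : ℝ)..T, t • (u * exp ((-(t ^ 2 / 2)) • (u * u : 𝔸))))
      atTop (𝓝 ↑u⁻¹) := by
  simpa only [integral_smul_mul_exp_neg_sq_half_smul_mul_self, mul_zero, sub_zero] using
    (h.const_mul (↑u⁻¹ : 𝔸)).const_sub (↑u⁻¹ : 𝔸)

end GaussianExp

namespace Matrix

variable {n 𝕜 : Type*} [Fintype n] [DecidableEq n] [RCLike 𝕜]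

open scoped ComplexOrder

theorem tendsto_exp_neg_smul_diagonal {d : n → ℝ} (hd : ∀ i, 0 < d i) :
    Tendsto (fun s : ℝ => exp ((-s) • diagonal (fun i => (d i : 𝕜)))) atTop (𝓝 0) := by
  have hentry (s : ℝ) (i : n) :
      exp ((-s) • (fun i => (d i : 𝕜))) i = ((Real.exp (-s * d i) : ℝ) : 𝕜) := by
    rw [Pi.coe_exp, Real.exp_eq_exp_ℝ, ← RCLike.algebraMap_eq_ofReal, algebraMap_exp_comm]
    simp [RCLike.real_smul_eq_coe_mul]
  rw [← diagonal_zero]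
  simp_rw [← diagonal_smul, exp_diagonal]
  refine (continuous_id.matrix_diagonal.tendsto _).comp (tendsto_pi_nhds.2 fun i => ?_)
  simp only [hentry]
  rw [← RCLike.ofReal_zero]
  refine (RCLike.continuous_ofReal.tendsto _).comp (Real.tendsto_exp_atBot.comp ?_)
  exact tendsto_neg_atTop_atBot.atBot_mul_const (hd i)

theorem PosDef.tendsto_exp_neg_smul {P : Matrix n n 𝕜} (hP : P.PosDef) :
    Tendsto (fun s : ℝ => exp ((-s) • P)) atTop (𝓝 0) := by
  set U := Unitary.toUnits hP.1.eigenvectorUnitary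
  set D := diagonal (fun i => (hP.1.eigenvalues i : 𝕜))
  have hconj (s : ℝ) :
      (-s) • P = U * ((-s) • D) * ((U⁻¹ : (Matrix n n 𝕜)ˣ) : Matrix n n 𝕜) := by
    rw [mul_smul_comm, smul_mul_assoc]
    congr 1
    simp only [Unitary.val_toUnits_apply, Unitary.val_inv_toUnits_apply, UnitaryGroup.inv_val,
      U, D]
    exact hP.1.spectral_theorem
  simp_rw [hconj, Matrix.exp_units_conj]
  have hcont :
      Continuous fun X : Matrix n n 𝕜 => U * X * ((U⁻¹ : (Matrix n n 𝕜)ˣ) : Matrix n n 𝕜) :=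
    (continuous_const.matrix_mul continuous_id).matrix_mul continuous_const
  have h := (hcont.tendsto 0).comp (tendsto_exp_neg_smul_diagonal hP.eigenvalues_pos)
  rwa [mul_zero, zero_mul] at h

theorem tendsto_exp_neg_sq_half_smul_conjTranspose_mul_self {A : Matrix n n 𝕜}
    (hA : IsUnit A.det) :
    Tendsto (fun T : ℝ => exp ((-(T ^ 2 / 2)) • (Aᴴ * A))) atTop (𝓝 0) := by
  have hP : (Aᴴ * A).PosDef := PosDef.conjTranspose_mul_self A
    (mulVec_injective_iff_isUnit.2 ((isUnit_iff_isUnit_det A).2 hA))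
  exact hP.tendsto_exp_neg_smul.comp ((tendsto_pow_atTop two_ne_zero).atTop_div_const two_pos)

theorem IsHermitian.tendsto_integral_smul_mul_exp_neg_sq_half_smul_mul_self_mulVec
    {A : Matrix n n 𝕜} (hA : A.IsHermitian) (hInv : IsUnit A.det) (b : n → 𝕜) :
    Tendsto (fun T : ℝ => ∫ t in (0 : ℝ)..T,
        (t • (A * NormedSpace.exp ((-(t ^ 2 / 2)) • (A * A)))) *ᵥ b)
      atTop (𝓝 (A⁻¹ *ᵥ b)) := by
  -- the Bochner integral on matrices needs some norm; all of them induce the same topology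
  open scoped Matrix.Norms.Operator in
  obtain ⟨u, rfl⟩ := (isUnit_iff_isUnit_det A).2 hInv
  let L : Matrix n n 𝕜 →L[ℝ] (n → 𝕜) := ((mulVecBilin ℝ ℝ).flip b).toContinuousLinearMap
  have hlim := tendsto_exp_neg_sq_half_smul_conjTranspose_mul_self hInv
  rw [hA.eq] at hlim
  have hint := (L.continuous.tendsto _).comp
    (tendsto_integral_smul_mul_exp_neg_sq_half_smul_mul_self u hlim)
  rw [← coe_units_inv]
  refine hint.congr fun T => ?_
  exact (L.intervalIntegral_comp_comm
    ((continuous_smul_mul_exp_neg_sq_half_smul _ _).intervalIntegrable _ _)).symm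

end Matrix

/-- For an `N×N` invertible Hermitian complex matrix `A` and `b ∈ ℂ^N`, the
solution `x = A⁻¹ b` of `A x = b` satisfies `x = ∫_0^∞ v(t,0) dt` where
`v(t,p) = (p I + t A) exp(-(p I + t A)²/2) b`; equivalently, the improper integral
`∫_0^∞ t A exp(-(t²/2) A²) b dt` converges and equals `A⁻¹ b`. -/
theorem stmt_11 {N : ℕ} (A : Matrix (Fin N) (Fin N) ℂ) (hA : A.IsHermitian)
    (hInv : IsUnit A.det) (b : Fin N → ℂ)
    (M : ℝ → ℝ → Matrix (Fin N) (Fin N) ℂ)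
    (hM : ∀ t p : ℝ, M t p = (p : ℂ) • (1 : Matrix (Fin N) (Fin N) ℂ) + (t : ℂ) • A)
    (v : ℝ → ℝ → Fin N → ℂ)
    (hv : ∀ t p : ℝ,
      v t p = (M t p * NormedSpace.exp ((-(1 / 2 : ℂ)) • (M t p * M t p))) *ᵥ b) :
    Tendsto (fun T : ℝ => ∫ t in (0:ℝ)..T, v t 0) atTop (nhds (A⁻¹ *ᵥ b)) ∧
    Tendsto (fun T : ℝ => ∫ t in (0:ℝ)..T,
        ((t : ℂ) • (A * NormedSpace.exp ((-((t : ℂ) ^ 2 / 2)) • (A * A)))) *ᵥ b)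
      atTop (nhds (A⁻¹ *ᵥ b)) := by
  have hsmul (t : ℝ) : ((t : ℂ) • (A * NormedSpace.exp ((-((t : ℂ) ^ 2 / 2)) • (A * A)))) *ᵥ b =
      (t • (A * NormedSpace.exp ((-(t ^ 2 / 2)) • (A * A)))) *ᵥ b := by
    rw [Complex.coe_smul, ← Complex.coe_smul (-(t ^ 2 / 2))]
    push_cast
    rfl
  have hv0 (t : ℝ) :
      v t 0 = ((t : ℂ) • (A * NormedSpace.exp ((-((t : ℂ) ^ 2 / 2)) • (A * A)))) *ᵥ b := by
    have hsq : (-(1 / 2 : ℂ)) • (((t : ℂ) • A) * ((t : ℂ) • A)) =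
        (-((t : ℂ) ^ 2 / 2)) • (A * A) := by
      rw [smul_mul_smul_comm, smul_smul]
      ring_nf
    rw [hv, hM, Complex.ofReal_zero, zero_smul, zero_add, hsq, smul_mul_assoc]
  have h := hA.tendsto_integral_smul_mul_exp_neg_sq_half_smul_mul_self_mulVec hInv b
  simp_rw [← hsmul] at h
  exact ⟨by simpa only [hv0] using h, h⟩
end

section
/- Let A be an N×N invertible Hermitian complex matrix and b ∈ ℂ^N. Define v(t, p) = ∫_0^t (p I + s A) exp(-(p I + s A)²/2) b ds for t ≥ 0 and p ∈ ℝ. Then v solves the sourced convection system ∂_t v(t,p) = A ∂_p v(t,p) + p e^{-p²/2} b with v(0, p) = 0, and lim_{t → ∞} v(t, 0) = A^{-1} b, the solution of A x = b. -/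
/-!
Write `M(s,p) = p • 1 + s • A` (`pencil`), `E(s,p) = exp (-M(s,p)² / 2)` (`pencilGaussian`) and
`w(t,p) = A⁻¹ (E(0,p) - E(t,p))` (`pencilSolution`). All `M(s,p)` lie in the commutative algebra
generated by `A`, so `E` is differentiated like a scalar Gaussian: `∂ₛ E = -M A E` and
`∂ₚ E = -M E`. The first identity makes `w(·,p)` an antiderivative of the integrand, so `v = w`;
the second gives `A ∂ₚ w = M(t,p) E(t,p) - M(0,p) E(0,p) = ∂ₜ w - p e^{-p²/2}`. Finally
`w(t,0) = A⁻¹ (1 - exp (-t² A² / 2))`, and `exp (-r A²) → 0` as `r → ∞` because `A²` is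
Hermitian with positive eigenvalues.
-/

open Filter Matrix NormedSpace Topology Unitary

section ExpOfCommuting

variable {𝔸 : Type*} [NormedRing 𝔸] [NormedAlgebra ℝ 𝔸] [CompleteSpace 𝔸]

theorem hasDerivAt_exp_of_commute {f : ℝ → 𝔸} {f' : 𝔸} {x : ℝ} (hf : HasDerivAt f f' x)
    (hcomm : ∀ y, Commute (f x) (f y)) :
    HasDerivAt (fun y => exp (f y)) (exp (f x) * f') x := by
  let _ : NormedAlgebra ℚ 𝔸 := .restrictScalars ℚ ℝ 𝔸
  have hsplit : (fun y => exp (f y)) = fun y => exp (f x) * exp (f y - f x) := by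
    funext y
    rw [← NormedSpace.exp_add_of_commute ((hcomm y).sub_right (Commute.refl _)), add_sub_cancel]
  have hincr : HasDerivAt (fun y => exp (f y - f x)) f' x := by
    have h0 : HasFDerivAt exp (1 : 𝔸 →L[ℝ] 𝔸) (f x - f x) := by
      rw [sub_self]
      exact hasFDerivAt_exp_zero
    exact (h0.comp_hasDerivAt x (hf.sub_const (f x)) :)
  rw [hsplit]
  exact hincr.const_mul (exp (f x))

end ExpOfCommuting

section PencilAlgebra

variable {𝔸 : Type*} [Ring 𝔸] [Algebra ℂ 𝔸]

noncomputable def pencil (a : 𝔸) (s p : ℝ) : 𝔸 :=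
  (p : ℂ) • 1 + (s : ℂ) • a

variable (a : 𝔸)

theorem commute_pencil (s p s' p' : ℝ) : Commute (pencil a s p) (pencil a s' p') := by
  unfold pencil
  refine .add_left (.add_right ?_ ?_) (.add_right ?_ ?_) <;>
    first
    | exact ((Commute.one_left _).smul_left _).smul_right _
    | exact ((Commute.one_right _).smul_left _).smul_right _
    | exact ((Commute.refl a).smul_left _).smul_right _

theorem commute_self_pencil (s p : ℝ) : Commute a (pencil a s p) :=
  ((Commute.one_right a).smul_right _).add_right ((Commute.refl a).smul_right _)

variable [TopologicalSpace 𝔸] [IsTopologicalRing 𝔸]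

noncomputable def pencilGaussian (s p : ℝ) : 𝔸 :=
  exp (-(1 / 2 : ℂ) • (pencil a s p * pencil a s p))

noncomputable def pencilSolution (c : 𝔸) (t p : ℝ) : 𝔸 :=
  c * (pencilGaussian a 0 p - pencilGaussian a t p)

theorem pencilGaussian_zero_right (t : ℝ) :
    pencilGaussian a t 0 = exp (-((t ^ 2 / 2 : ℝ) : ℂ) • (a * a)) := by
  simp only [pencilGaussian, pencil, Complex.ofReal_zero, zero_smul, zero_add,
    smul_mul_smul_comm, smul_smul]
  push_cast
  ring_nf

variable {a}

theorem tendsto_pencilSolution_atTop (c : 𝔸)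
    (h : Tendsto (fun t => pencilGaussian a t 0) atTop (𝓝 0)) :
    Tendsto (fun t => pencilSolution a c t 0) atTop (𝓝 c) := by
  have hzero : pencilGaussian a 0 0 = 1 := by simp [pencilGaussian, pencil]
  simp only [pencilSolution, hzero]
  simpa using (tendsto_const_nhds (x := c)).mul ((tendsto_const_nhds (x := (1 : 𝔸))).sub h)

end PencilAlgebra

section PencilCalculus

variable {𝔸 : Type*} [NormedRing 𝔸] [NormedAlgebra ℂ 𝔸]

theorem exp_smul_one (z : ℂ) : exp (z • (1 : 𝔸)) = Complex.exp z • (1 : 𝔸) := by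
  simpa only [Algebra.algebraMap_eq_smul_one, Complex.exp_eq_exp_ℂ] using
    (algebraMap_exp_comm (𝔸 := 𝔸) z).symm

theorem hasDerivAt_exp_neg_half_mul_self [CompleteSpace 𝔸] {f : ℝ → 𝔸} {f' : 𝔸} {x : ℝ}
    (hf : HasDerivAt f f' x) (hcomm : ∀ y z, Commute (f y) (f z)) (hf' : Commute (f x) f') :
    HasDerivAt (fun y => exp (-(1 / 2 : ℂ) • (f y * f y)))
      (-(f x * f') * exp (-(1 / 2 : ℂ) • (f x * f x))) x := by
  have hsq : HasDerivAt (fun y => -(1 / 2 : ℂ) • (f y * f y)) (-(f x * f')) x := by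
    have hmul : HasDerivAt (fun y => f y * f y) (f' * f x + f x * f') x := hf.mul hf
    refine (hmul.const_smul (-(1 / 2 : ℂ))).congr_deriv ?_
    rw [← hf'.eq]
    module
  have hexp := hasDerivAt_exp_of_commute hsq fun y =>
    ((((hcomm x y).mul_right (hcomm x y)).mul_left
      ((hcomm x y).mul_right (hcomm x y))).smul_left _).smul_right _
  refine hexp.congr_deriv ?_
  have hx : Commute (f x * f') (f x * f x) :=
    ((Commute.refl _).mul_right (Commute.refl _)).mul_left (hf'.symm.mul_right hf'.symm)
  exact (hx.smul_right _).neg_left.exp_right.eq.symm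

variable (a : 𝔸)

theorem hasDerivAt_pencil_left (s p : ℝ) : HasDerivAt (fun s => pencil a s p) a s :=
  (((hasDerivAt_id s).ofReal_comp.smul_const a).const_add ((p : ℂ) • (1 : 𝔸))).congr_deriv
    (by simp)

theorem hasDerivAt_pencil_right (s p : ℝ) : HasDerivAt (fun p => pencil a s p) 1 p :=
  (((hasDerivAt_id p).ofReal_comp.smul_const (1 : 𝔸)).add_const ((s : ℂ) • a)).congr_deriv
    (by simp)

theorem pencil_mul_pencilGaussian_zero_left (p : ℝ) :
    pencil a 0 p * pencilGaussian a 0 p = ((p * Real.exp (-p ^ 2 / 2) : ℝ) : ℂ) • 1 := by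
  have hpencil : pencil a 0 p = (p : ℂ) • 1 := by simp [pencil]
  rw [pencilGaussian, hpencil, smul_mul_smul_comm, one_mul, smul_smul, exp_smul_one,
    smul_mul_smul_comm, one_mul]
  congr 1
  push_cast
  ring_nf

variable [CompleteSpace 𝔸]

theorem hasDerivAt_pencilGaussian_left (s p : ℝ) :
    HasDerivAt (fun s => pencilGaussian a s p) (-(pencil a s p * a) * pencilGaussian a s p) s :=
  hasDerivAt_exp_neg_half_mul_self (hasDerivAt_pencil_left a s p)
    (fun _ _ => commute_pencil a _ _ _ _) (commute_self_pencil a s p).symm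

theorem hasDerivAt_pencilGaussian_right (s p : ℝ) :
    HasDerivAt (fun p => pencilGaussian a s p) (-pencil a s p * pencilGaussian a s p) p :=
  (hasDerivAt_exp_neg_half_mul_self (hasDerivAt_pencil_right a s p)
    (fun _ _ => commute_pencil a _ _ _ _) (Commute.one_right _)).congr_deriv (by rw [mul_one]; rfl)

theorem continuous_pencil_mul_pencilGaussian (p : ℝ) :
    Continuous fun s => pencil a s p * pencilGaussian a s p :=
  continuous_iff_continuousAt.2 fun s => (hasDerivAt_pencil_left a s p).continuousAt.mul
    (hasDerivAt_pencilGaussian_left a s p).continuousAt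

variable {a} {c : 𝔸}

theorem hasDerivAt_pencilSolution_left (hca : c * a = 1) (t p : ℝ) :
    HasDerivAt (fun t => pencilSolution a c t p) (pencil a t p * pencilGaussian a t p) t := by
  refine ((hasDerivAt_pencilGaussian_left a t p).const_sub _ |>.const_mul c).congr_deriv ?_
  rw [neg_mul, neg_neg, ← (commute_self_pencil a t p).eq, mul_assoc, ← mul_assoc c, hca, one_mul]

theorem hasDerivAt_pencilSolution_right (t p : ℝ) :
    HasDerivAt (fun p => pencilSolution a c t p)
      (c * (pencil a t p * pencilGaussian a t p - pencil a 0 p * pencilGaussian a 0 p)) p := by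
  refine (((hasDerivAt_pencilGaussian_right a 0 p).sub
    (hasDerivAt_pencilGaussian_right a t p)).const_mul c).congr_deriv ?_
  simp only [neg_mul, sub_neg_eq_add]
  abel_nf

end PencilCalculus

section Hermitian

variable {n : Type*} [Fintype n] [DecidableEq n] {A : Matrix n n ℂ}

theorem Matrix.IsHermitian.exp_smul_mul_self (hA : A.IsHermitian) (z : ℂ) :
    NormedSpace.exp (z • (A * A)) = conjStarAlgAut ℂ _ hA.eigenvectorUnitary
      (diagonal fun i => Complex.exp (z * (hA.eigenvalues i : ℂ) ^ 2)) := by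
  set U : Matrix n n ℂ := ↑hA.eigenvectorUnitary
  have hinv : U⁻¹ = star U := Matrix.inv_eq_left_inv (Unitary.coe_star_mul_self _)
  conv_lhs => rw [hA.spectral_theorem, ← map_mul, ← map_smul, conjStarAlgAut_apply, ← hinv,
    Matrix.exp_conj _ _ Unitary.isUnit_coe, diagonal_mul_diagonal, ← diagonal_smul, exp_diagonal]
  rw [conjStarAlgAut_apply, hinv]
  congr 3
  funext i
  simp [Complex.exp_eq_exp_ℂ, sq]

theorem Matrix.IsHermitian.tendsto_exp_neg_smul_mul_self (hA : A.IsHermitian)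
    (hdet : IsUnit A.det) :
    Tendsto (fun r : ℝ => NormedSpace.exp (-(r : ℂ) • (A * A))) atTop (𝓝 0) := by
  set φ := conjStarAlgAut ℂ _ hA.eigenvectorUnitary
  have hφ : Continuous φ := by
    have : ⇑φ = fun X => (hA.eigenvectorUnitary : Matrix n n ℂ) * X *
        star (hA.eigenvectorUnitary : Matrix n n ℂ) :=
      funext (conjStarAlgAut_apply _)
    rw [this]
    exact (continuous_const.matrix_mul continuous_id).matrix_mul continuous_const
  have hentry (i : n) :
      Tendsto (fun r : ℝ => Complex.exp (-(r : ℂ) * (hA.eigenvalues i : ℂ) ^ 2)) atTop (𝓝 0) := by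
    have hpos : 0 < hA.eigenvalues i ^ 2 := by
      refine sq_pos_of_ne_zero fun h => hdet.ne_zero ?_
      rw [hA.det_eq_prod_eigenvalues]
      exact Finset.prod_eq_zero (Finset.mem_univ i) (by simp [h])
    have hreal := Real.tendsto_exp_neg_atTop_nhds_zero.comp (tendsto_id.atTop_mul_const hpos)
    refine ((Complex.continuous_ofReal.tendsto 0).comp hreal).congr fun r => ?_
    simp [Complex.ofReal_exp]
  refine Tendsto.congr (fun r => (hA.exp_smul_mul_self _).symm) ?_
  rw [← map_zero φ, ← diagonal_zero]
  exact (hφ.tendsto _).comp ((continuous_id.matrix_diagonal.tendsto _).comp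
    (tendsto_pi_nhds.2 hentry))

theorem tendsto_pencilGaussian_zero_right (hA : A.IsHermitian) (hdet : IsUnit A.det) :
    Tendsto (fun t => pencilGaussian A t 0) atTop (𝓝 0) := by
  simp only [pencilGaussian_zero_right]
  exact (hA.tendsto_exp_neg_smul_mul_self hdet).comp
    ((tendsto_pow_atTop two_ne_zero).atTop_div_const two_pos)

end Hermitian

section MatrixMulVec

attribute [local instance] Matrix.linftyOpNormedRing Matrix.linftyOpNormedAlgebra

variable {n : Type*} [Fintype n] [DecidableEq n] {A : Matrix n n ℂ}

noncomputable def Matrix.mulVecLeftCLM (b : n → ℂ) : Matrix n n ℂ →L[ℝ] n → ℂ :=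
  LinearMap.toContinuousLinearMap
    { toFun := (· *ᵥ b)
      map_add' := fun X Y => add_mulVec X Y b
      map_smul' := fun r X => smul_mulVec r X b }

theorem HasDerivAt.matrix_mulVec_const {f : ℝ → Matrix n n ℂ} {f' : Matrix n n ℂ} {x : ℝ}
    (hf : HasDerivAt f f' x) (b : n → ℂ) : HasDerivAt (fun x => f x *ᵥ b) (f' *ᵥ b) x :=
  (Matrix.mulVecLeftCLM b).hasFDerivAt.comp_hasDerivAt x hf

theorem hasDerivAt_pencilSolution_mulVec_left (hA : IsUnit A.det) (b : n → ℂ) (t p : ℝ) :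
    HasDerivAt (fun t => pencilSolution A A⁻¹ t p *ᵥ b)
      ((pencil A t p * pencilGaussian A t p) *ᵥ b) t :=
  (hasDerivAt_pencilSolution_left (nonsing_inv_mul A hA) t p).matrix_mulVec_const b

theorem integral_pencil_mul_pencilGaussian_mulVec (hA : IsUnit A.det) (b : n → ℂ) (t p : ℝ) :
    ∫ s in (0 : ℝ)..t, (pencil A s p * pencilGaussian A s p) *ᵥ b =
      pencilSolution A A⁻¹ t p *ᵥ b := by
  rw [intervalIntegral.integral_eq_sub_of_hasDerivAt
    (fun s _ => hasDerivAt_pencilSolution_mulVec_left hA b s p)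
    (((continuous_pencil_mul_pencilGaussian A p).matrix_mulVec
      continuous_const).intervalIntegrable 0 t)]
  simp [pencilSolution]

theorem hasDerivAt_pencilSolution_mulVec_convection (hA : IsUnit A.det) (b : n → ℂ) (t p : ℝ) :
    HasDerivAt (fun t => pencilSolution A A⁻¹ t p *ᵥ b)
      (A *ᵥ deriv (fun q => pencilSolution A A⁻¹ t q *ᵥ b) p +
        ((p * Real.exp (-p ^ 2 / 2) : ℝ) : ℂ) • b) t := by
  have hderiv : deriv (fun q => pencilSolution A A⁻¹ t q *ᵥ b) p =
      (A⁻¹ * (pencil A t p * pencilGaussian A t p - pencil A 0 p * pencilGaussian A 0 p)) *ᵥ b :=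
    ((hasDerivAt_pencilSolution_right t p).matrix_mulVec_const b).deriv
  -- stated explicitly so that `rw` sees the global instances rather than the local norm's
  have hsource : pencil A 0 p * pencilGaussian A 0 p = ((p * Real.exp (-p ^ 2 / 2) : ℝ) : ℂ) • 1 :=
    pencil_mul_pencilGaussian_zero_left A p
  rw [hderiv, mulVec_mulVec, ← mul_assoc, mul_nonsing_inv A hA, one_mul, sub_mulVec, hsource,
    smul_mulVec, one_mulVec, sub_add_cancel]
  exact hasDerivAt_pencilSolution_mulVec_left hA b t p

end MatrixMulVec

/-- Let `A` be an `N×N` invertible Hermitian complex matrix, `b ∈ ℂ^N`, and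
`v(t,p) = ∫_0^t (p I + s A) exp(-(p I + s A)²/2) b ds` for `t ≥ 0`, `p ∈ ℝ`. Then `v` solves
the sourced convection system `∂ₜ v = A ∂ₚ v + p e^{-p²/2} b` with `v(0,p) = 0`, and
`v(t,0) → A⁻¹ b` (the solution of `A x = b`) as `t → ∞`. -/
theorem stmt_12 {N : ℕ} (A : Matrix (Fin N) (Fin N) ℂ) (hA : A.IsHermitian)
    (hInv : IsUnit A.det) (b : Fin N → ℂ)
    (M : ℝ → ℝ → Matrix (Fin N) (Fin N) ℂ)
    (hM : ∀ s p : ℝ, M s p = (p : ℂ) • (1 : Matrix (Fin N) (Fin N) ℂ) + (s : ℂ) • A)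
    (v : ℝ → ℝ → Fin N → ℂ)
    (hv : ∀ t : ℝ, 0 ≤ t → ∀ p : ℝ,
      v t p = ∫ s in (0:ℝ)..t,
        (M s p * NormedSpace.exp ((-(1 / 2 : ℂ)) • (M s p * M s p))) *ᵥ b) :
    (∀ p : ℝ, v 0 p = 0) ∧
    (∀ t ∈ Set.Ici (0:ℝ), ∀ p : ℝ,
      HasDerivWithinAt (fun τ => v τ p)
        (A *ᵥ deriv (fun q => v t q) p + ((p * Real.exp (-p ^ 2 / 2) : ℝ) : ℂ) • b)
        (Set.Ici 0) t) ∧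
    Tendsto (fun t : ℝ => v t 0) atTop (nhds (A⁻¹ *ᵥ b)) := by
  obtain rfl : M = pencil A := funext₂ hM
  have hvw : ∀ t, 0 ≤ t → ∀ p, v t p = pencilSolution A A⁻¹ t p *ᵥ b := fun t ht p =>
    (hv t ht p).trans (integral_pencil_mul_pencilGaussian_mulVec hInv b t p)
  refine ⟨fun p => by simp [hv 0 le_rfl p], fun t ht p => ?_, ?_⟩
  · rw [show (fun q => v t q) = fun q => pencilSolution A A⁻¹ t q *ᵥ b from funext (hvw t ht)]
    exact (hasDerivAt_pencilSolution_mulVec_convection hInv b t p).hasDerivWithinAt.congr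
      (fun τ hτ => hvw τ hτ p) (hvw t ht p)
  · have hlim := tendsto_pencilSolution_atTop A⁻¹ (tendsto_pencilGaussian_zero_right hA hInv)
    refine (((continuous_id.matrix_mulVec continuous_const).tendsto _).comp hlim).congr' ?_
    filter_upwards [eventually_ge_atTop 0] with t ht using (hvw t ht 0).symm
end

section
/- Let A be an N×N Hermitian complex matrix, let [a,b] ⊂ ℝ, let Q ≥ 1, and let x_0, …, x_{Q-1} ∈ [a,b] and w_0, …, w_{Q-1} ∈ ℝ be quadrature nodes and weights. Let f : ℝ × [a,b] → ℂ be such that f(λ, ·) ∈ C^{2Q}[a,b] for every eigenvalue λ of A, and suppose the quadrature rule satisfies the Gaussian error formula: for every eigenvalue λ of A there exists ξ ∈ (a,b) with ∫_a^b f(λ, x) dx − Σ_{q=0}^{Q−1} w_q f(λ, x_q) = ((b−a)^{2Q+1} (Q!)^4 / ((2Q+1) ((2Q)!)^3)) · f^{(2Q)}(λ, ξ), where f^{(2Q)} denotes the 2Q-th partial derivative in the second variable. Then, defining f(A, x) by the functional calculus applied to the Hermitian matrix A, one has ‖∫_a^b f(A, x) dx − Σ_{q=0}^{Q−1} w_q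 f(A, x_q)‖ ≤ ((b−a)^{2Q+1} (Q!)^4 / ((2Q+1) ((2Q)!)^3)) · max_{x ∈ [a,b]} ‖f^{(2Q)}(A, x)‖, in the spectral norm. -/
open MeasureTheory Matrix
open scoped Matrix.Norms.L2Operator

/-!
The map `d ↦ U diag(d) U†`, with `U` the eigenvector unitary of `A`, is a linear isometry from
`Fin N → ℂ` with the sup norm onto matrices with the spectral norm, and it commutes with
integrals and finite sums. So the matrix quadrature error is the image of the vector of scalar
errors `E(λᵢ)`, and its norm is `maxᵢ |E(λᵢ)|`. By the Gaussian error formula,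
`|E(λᵢ)| = C |f^{(2Q)}(λᵢ, ξᵢ)| ≤ C ‖f^{(2Q)}(A, ξᵢ)‖`, and the supremum over `[a, b]` is finite
because `f^{(2Q)}(A, ·)` is continuous on a compact interval.
-/

/-- Functional calculus for a Hermitian matrix `A = U Λ U†`: apply `g : ℝ → ℂ` to the
eigenvalues, i.e. `g(A) = U diag(g(λ₁), …, g(λ_N)) U†`. -/
noncomputable def hermitianFunCalc {N : ℕ} {A : Matrix (Fin N) (Fin N) ℂ}
    (hA : A.IsHermitian) (g : ℝ → ℂ) : Matrix (Fin N) (Fin N) ℂ :=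
  (hA.eigenvectorUnitary : Matrix (Fin N) (Fin N) ℂ) *
    Matrix.diagonal (fun i => g (hA.eigenvalues i)) *
    star (hA.eigenvectorUnitary : Matrix (Fin N) (Fin N) ℂ)

theorem intervalIntegrable_pi_iff {n E : Type*} [Fintype n] [NormedAddCommGroup E]
    {v : ℝ → n → E} {a b : ℝ} :
    IntervalIntegrable v volume a b ↔ ∀ i, IntervalIntegrable (v · i) volume a b := by
  simp only [IntervalIntegrable, IntegrableOn, integrable_pi_iff, forall_and]

section QuadratureError

variable {ι E : Type*} [Fintype ι] [NormedAddCommGroup E] [NormedSpace ℝ E]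

noncomputable def quadratureError (a b : ℝ) (x w : ι → ℝ) (v : ℝ → E) : E :=
  (∫ s in a..b, v s) - ∑ q, w q • v (x q)

theorem ContinuousLinearMap.map_quadratureError {𝕜 F : Type*} [RCLike 𝕜] [NormedSpace 𝕜 E]
    [CompleteSpace E] [NormedAddCommGroup F] [NormedSpace 𝕜 F] [NormedSpace ℝ F] [CompleteSpace F]
    [IsScalarTower ℝ 𝕜 E] [IsScalarTower ℝ 𝕜 F]
    (L : E →L[𝕜] F) {a b : ℝ} (x w : ι → ℝ) {v : ℝ → E} (hv : IntervalIntegrable v volume a b) :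
    L (quadratureError a b x w v) = quadratureError a b x w (fun s => L (v s)) := by
  simp only [quadratureError, map_sub, map_sum, L.map_smul_of_tower,
    L.intervalIntegral_comp_comm hv]

end QuadratureError

theorem norm_le_iSup_norm_of_continuousOn {X E : Type*} [TopologicalSpace X]
    [SeminormedAddCommGroup E] {K : Set X} (hK : IsCompact K) {g : X → E} (hg : ContinuousOn g K)
    {s : X} (hs : s ∈ K) : ‖g s‖ ≤ ⨆ t : K, ‖g t‖ := by
  refine le_ciSup (f := fun t : K => ‖g t‖) ?_ ⟨s, hs⟩
  have := hK.bddAbove_image hg.norm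
  rwa [Set.image_eq_range] at this

namespace Matrix.IsHermitian

variable {n 𝕜 : Type*} [Fintype n] [DecidableEq n] [RCLike 𝕜] {A : Matrix n n 𝕜}

noncomputable def eigenbasisDiagonal (hA : A.IsHermitian) : (n → 𝕜) →ₗᵢ[𝕜] Matrix n n 𝕜 where
  toLinearMap := (Unitary.conjStarAlgAut 𝕜 _ hA.eigenvectorUnitary).toAlgEquiv.toLinearMap ∘ₗ
    diagonalLinearMap n 𝕜 𝕜
  norm_map' d := by
    simp [← Unitary.coe_star, CStarRing.norm_mul_coe_unitary, CStarRing.norm_coe_unitary_mul]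

theorem eigenbasisDiagonal_apply (hA : A.IsHermitian) (d : n → 𝕜) :
    hA.eigenbasisDiagonal d = (hA.eigenvectorUnitary : Matrix n n 𝕜) * diagonal d *
      star (hA.eigenvectorUnitary : Matrix n n 𝕜) := by
  simp [eigenbasisDiagonal]

end Matrix.IsHermitian

section

variable {N : ℕ} {A : Matrix (Fin N) (Fin N) ℂ} (hA : A.IsHermitian)

theorem hermitianFunCalc_eq_eigenbasisDiagonal (g : ℝ → ℂ) :
    hermitianFunCalc hA g = hA.eigenbasisDiagonal (fun i => g (hA.eigenvalues i)) :=
  (hA.eigenbasisDiagonal_apply _).symm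

theorem norm_hermitianFunCalc (g : ℝ → ℂ) :
    ‖hermitianFunCalc hA g‖ = ‖fun i => g (hA.eigenvalues i)‖ := by
  rw [hermitianFunCalc_eq_eigenbasisDiagonal, LinearIsometry.norm_map]

theorem norm_apply_eigenvalue_le_norm_hermitianFunCalc (g : ℝ → ℂ) (i : Fin N) :
    ‖g (hA.eigenvalues i)‖ ≤ ‖hermitianFunCalc hA g‖ :=
  (norm_hermitianFunCalc hA g).symm ▸ norm_le_pi_norm (fun i => g (hA.eigenvalues i)) i

theorem continuousOn_hermitianFunCalc {f : ℝ → ℝ → ℂ} {K : Set ℝ}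
    (hf : ∀ i, ContinuousOn (f (hA.eigenvalues i)) K) :
    ContinuousOn (fun s => hermitianFunCalc hA (fun lam => f lam s)) K := by
  simp only [hermitianFunCalc_eq_eigenbasisDiagonal]
  exact hA.eigenbasisDiagonal.continuous.comp_continuousOn (continuousOn_pi.2 hf)

theorem quadratureError_hermitianFunCalc {ι : Type*} [Fintype ι] {a b : ℝ} (x w : ι → ℝ)
    {f : ℝ → ℝ → ℂ} (hf : ∀ i, IntervalIntegrable (f (hA.eigenvalues i)) volume a b) :
    quadratureError a b x w (fun s => hermitianFunCalc hA (fun lam => f lam s)) =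
      hA.eigenbasisDiagonal (fun i => quadratureError a b x w (f (hA.eigenvalues i))) := by
  have hv : IntervalIntegrable (fun s i => f (hA.eigenvalues i) s) volume a b :=
    intervalIntegrable_pi_iff.2 hf
  simp only [hermitianFunCalc_eq_eigenbasisDiagonal]
  refine (hA.eigenbasisDiagonal.toContinuousLinearMap.map_quadratureError x w hv).symm.trans ?_
  exact congrArg hA.eigenbasisDiagonal
    (funext fun i => (ContinuousLinearMap.proj (R := ℂ) i).map_quadratureError x w hv)

end

theorem stmt_14_general {N : ℕ} (A : Matrix (Fin N) (Fin N) ℂ) (hA : A.IsHermitian)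
    (a b : ℝ) (hab : a ≤ b) (Q : ℕ)
    (x : Fin Q → ℝ) (w : Fin Q → ℝ)
    (f : ℝ → ℝ → ℂ)
    (hf : ∀ i : Fin N, ContDiffOn ℝ ((2 * Q : ℕ) : ℕ∞) (f (hA.eigenvalues i)) (Set.Icc a b))
    (herr : ∀ i : Fin N, ∃ ξ ∈ Set.Ioo a b,
      (∫ s in a..b, f (hA.eigenvalues i) s) - ∑ q, (w q : ℂ) * f (hA.eigenvalues i) (x q)
        = (((b - a) ^ (2 * Q + 1) * (Q.factorial : ℝ) ^ 4 /
            ((2 * Q + 1) * ((2 * Q).factorial : ℝ) ^ 3) : ℝ) : ℂ) *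
          iteratedDerivWithin (2 * Q) (f (hA.eigenvalues i)) (Set.Icc a b) ξ) :
    ‖(∫ s in a..b, hermitianFunCalc hA (fun lam => f lam s)) -
        ∑ q, w q • hermitianFunCalc hA (fun lam => f lam (x q))‖
      ≤ ((b - a) ^ (2 * Q + 1) * (Q.factorial : ℝ) ^ 4 /
          ((2 * Q + 1) * ((2 * Q).factorial : ℝ) ^ 3)) *
        ⨆ s : Set.Icc a b,
          ‖hermitianFunCalc hA
            (fun lam => iteratedDerivWithin (2 * Q) (f lam) (Set.Icc a b) (s : ℝ))‖ := by
  set C : ℝ := (b - a) ^ (2 * Q + 1) * (Q.factorial : ℝ) ^ 4 /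
      ((2 * Q + 1) * ((2 * Q).factorial : ℝ) ^ 3)
  have hC : 0 ≤ C := by have := sub_nonneg.2 hab; positivity
  have hS := Real.iSup_nonneg fun s : Set.Icc a b => norm_nonneg
    (hermitianFunCalc hA fun lam => iteratedDerivWithin (2 * Q) (f lam) (Set.Icc a b) s)
  change ‖quadratureError a b x w (fun s => hermitianFunCalc hA (fun lam => f lam s))‖ ≤ _
  rw [quadratureError_hermitianFunCalc hA x w
      fun i => (hf i).continuousOn.intervalIntegrable_of_Icc hab,
    LinearIsometry.norm_map, pi_norm_le_iff_of_nonneg (mul_nonneg hC hS)]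
  intro i
  obtain ⟨ξ, hξ, hξ_err⟩ := herr i
  have hD : ContinuousOn (fun s => hermitianFunCalc hA
      (fun lam => iteratedDerivWithin (2 * Q) (f lam) (Set.Icc a b) s)) (Set.Icc a b) :=
    continuousOn_hermitianFunCalc hA fun j => (hf j).continuousOn_iteratedDerivWithin le_rfl
      (uniqueDiffOn_Icc (hξ.1.trans hξ.2))
  calc ‖quadratureError a b x w (f (hA.eigenvalues i))‖
      = C * ‖iteratedDerivWithin (2 * Q) (f (hA.eigenvalues i)) (Set.Icc a b) ξ‖ := by
        simp only [quadratureError, Complex.real_smul, hξ_err, norm_mul, Complex.norm_real,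
          Real.norm_of_nonneg hC]
    _ ≤ C * _ := mul_le_mul_of_nonneg_left
        ((norm_apply_eigenvalue_le_norm_hermitianFunCalc hA _ i).trans
          (norm_le_iSup_norm_of_continuousOn isCompact_Icc hD (Set.Ioo_subset_Icc_self hξ))) hC

/-- the Gaussian-quadrature error bound for matrix functions of a Hermitian
matrix `A`, in the spectral norm: if for each eigenvalue `λ` of `A` the quadrature rule
satisfies the Gaussian error formula with constant
`C = (b-a)^{2Q+1} (Q!)⁴ / ((2Q+1) ((2Q)!)³)`, then
`‖∫_a^b f(A,x) dx − Σ_q w_q f(A,x_q)‖ ≤ C · max_{x ∈ [a,b]} ‖f^{(2Q)}(A,x)‖`. -/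
theorem stmt_14 {N : ℕ} (A : Matrix (Fin N) (Fin N) ℂ) (hA : A.IsHermitian)
    (a b : ℝ) (hab : a ≤ b) (Q : ℕ) (hQ : 1 ≤ Q)
    (x : Fin Q → ℝ) (w : Fin Q → ℝ) (hx : ∀ q, x q ∈ Set.Icc a b)
    (f : ℝ → ℝ → ℂ)
    (hf : ∀ i : Fin N, ContDiffOn ℝ ((2 * Q : ℕ) : ℕ∞) (f (hA.eigenvalues i)) (Set.Icc a b))
    (herr : ∀ i : Fin N, ∃ ξ ∈ Set.Ioo a b,
      (∫ s in a..b, f (hA.eigenvalues i) s) - ∑ q, (w q : ℂ) * f (hA.eigenvalues i) (x q)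
        = (((b - a) ^ (2 * Q + 1) * (Q.factorial : ℝ) ^ 4 /
            ((2 * Q + 1) * ((2 * Q).factorial : ℝ) ^ 3) : ℝ) : ℂ) *
          iteratedDerivWithin (2 * Q) (f (hA.eigenvalues i)) (Set.Icc a b) ξ) :
    ‖(∫ s in a..b, hermitianFunCalc hA (fun lam => f lam s)) -
        ∑ q, w q • hermitianFunCalc hA (fun lam => f lam (x q))‖
      ≤ ((b - a) ^ (2 * Q + 1) * (Q.factorial : ℝ) ^ 4 /
          ((2 * Q + 1) * ((2 * Q).factorial : ℝ) ^ 3)) *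
        ⨆ s : Set.Icc a b,
          ‖hermitianFunCalc hA
            (fun lam => iteratedDerivWithin (2 * Q) (f lam) (Set.Icc a b) (s : ℝ))‖ :=
  stmt_14_general A hA a b hab Q x w f hf herr
end
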